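/- If P is a polynomial in three variables over ℂ such that P(tr(A), tr(B), tr(AB)) = 0 for all matrices A, B ∈ SL(2,ℂ), then P is the zero polynomial. -/

import Mathlib

/-! Over an algebraically closed field every triple `(x, y, z)` is the trace triple of a pair
in `SL(2)`: take `A` the companion matrix of `t² - x t + 1` and `B` with diagonal `(0, y)` and
off-diagonal entries `q, -q⁻¹`, where `q + q⁻¹ = z`. A complex polynomial vanishing on all of
`ℂ³` is zero. -/

open Polynomial in
lemma IsAlgClosed.exists_add_inv_eq {K : Type*} [Field K] [IsAlgClosed K] (z : K) :
    ∃ q : K, q ≠ 0 ∧ q + q⁻¹ = z := by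
  have hdeg : (X ^ 2 - C z * X + 1 : K[X]).degree = 2 := by compute_degree!
  obtain ⟨q, hq⟩ := IsAlgClosed.exists_root (X ^ 2 - C z * X + 1 : K[X]) (by rw [hdeg]; decide)
  have hq : q ^ 2 - z * q + 1 = 0 := by simpa using hq
  have hq0 : q ≠ 0 := by rintro rfl; simp at hq
  refine ⟨q, hq0, ?_⟩
  field_simp
  linear_combination hq

namespace Matrix.SpecialLinearGroup

variable {K : Type*} [Field K]

def traceCoordinates (p : SpecialLinearGroup (Fin 2) K × SpecialLinearGroup (Fin 2) K) :
    Fin 3 → K :=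
  ![trace (p.1 : Matrix (Fin 2) (Fin 2) K), trace (p.2 : Matrix (Fin 2) (Fin 2) K),
    trace ((p.1 * p.2 : SpecialLinearGroup (Fin 2) K) : Matrix (Fin 2) (Fin 2) K)]

theorem traceCoordinates_surjective [IsAlgClosed K] :
    Function.Surjective (traceCoordinates (K := K)) := by
  intro v
  obtain ⟨q, hq0, hq⟩ := IsAlgClosed.exists_add_inv_eq (v 2)
  let A : SpecialLinearGroup (Fin 2) K := ⟨!![v 0, -1; 1, 0], by simp [det_fin_two_of]⟩
  let B : SpecialLinearGroup (Fin 2) K := ⟨!![0, q; -q⁻¹, v 1], by simp [det_fin_two_of, hq0]⟩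
  have hAB : ((A * B : SpecialLinearGroup (Fin 2) K) : Matrix (Fin 2) (Fin 2) K)
      = !![q⁻¹, v 0 * q - v 1; 0, q] := by
    rw [coe_mul]
    simp only [A, B, mul_fin_two]
    congr 1
    simp [sub_eq_add_neg]
  refine ⟨(A, B), ?_⟩
  ext i
  fin_cases i
  · simp [traceCoordinates, A, trace_fin_two_of]
  · simp [traceCoordinates, B, trace_fin_two_of]
  · simp [traceCoordinates, hAB, trace_fin_two_of, ← hq, add_comm]

end Matrix.SpecialLinearGroup

/-- Algebraic independence of the trace coordinates: a polynomial `P ∈ ℂ[x,y,z]` that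
vanishes on `(tr A, tr B, tr AB)` for all `A, B ∈ SL(2,ℂ)` is the zero polynomial. -/
theorem trace_coordinates_algebraically_independent (P : MvPolynomial (Fin 3) ℂ)
    (h : ∀ A B : Matrix.SpecialLinearGroup (Fin 2) ℂ,
      MvPolynomial.eval
        ![Matrix.trace (A : Matrix (Fin 2) (Fin 2) ℂ),
          Matrix.trace (B : Matrix (Fin 2) (Fin 2) ℂ),
          Matrix.trace ((A * B : Matrix.SpecialLinearGroup (Fin 2) ℂ) :
            Matrix (Fin 2) (Fin 2) ℂ)] P = 0) :
    P = 0 := by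
  refine MvPolynomial.funext fun v => ?_
  obtain ⟨⟨A, B⟩, rfl⟩ := Matrix.SpecialLinearGroup.traceCoordinates_surjective v
  exact h A B
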